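/- Let d ≥ 2, let 0 < δ < π, and let a, b, c, dd ∈ S^d satisfy dist_S(a,b) = δ and dist_S(c,dd) = δ, with a ≠ −dd and b ≠ −c. Suppose a point x lies on both the arc a·dd and the arc b·c, but x does not lie on the arc ab and does not lie on the arc c·dd. Then dist_S(a,dd) > δ or dist_S(b,c) > δ. -/

import Mathlib

open scoped RealInnerProductSpace
open Real

noncomputable section

/-- The unit sphere `S^d` in `E = EuclideanSpace ℝ (Fin (d+1))`. -/
def Sph (d : ℕ) : Set (EuclideanSpace ℝ (Fin (d + 1))) := {x | ‖x‖ = 1}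

/-- Spherical distance of two points of the sphere. -/
def sdist {d : ℕ} (x y : EuclideanSpace ℝ (Fin (d + 1))) : ℝ := Real.arccos ⟪x, y⟫

/-- The arc connecting `a` and `b`. -/
def arc {d : ℕ} (a b : EuclideanSpace ℝ (Fin (d + 1))) :
    Set (EuclideanSpace ℝ (Fin (d + 1))) :=
  {z | ∃ s ∈ Set.Icc (0 : ℝ) 1, z = ‖(1 - s) • a + s • b‖⁻¹ • ((1 - s) • a + s • b)}

/-- The hemisphere `H(c)` with center `c`. -/
def Hemi {d : ℕ} (c : EuclideanSpace ℝ (Fin (d + 1))) :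
    Set (EuclideanSpace ℝ (Fin (d + 1))) :=
  {x ∈ Sph d | 0 ≤ ⟪c, x⟫}

/-- A set on the sphere is spherically convex: it lies on the sphere, contains no pair of
antipodes, and the cone over it is a convex subset of the ambient space. -/
def SphConvex {d : ℕ} (C : Set (EuclideanSpace ℝ (Fin (d + 1)))) : Prop :=
  C ⊆ Sph d ∧ (∀ x ∈ C, -x ∉ C) ∧
    Convex ℝ {y | ∃ t : ℝ, 0 ≤ t ∧ ∃ x ∈ C, y = t • x}

/-- Interior of `C` relative to the sphere `S^d` (interior in the subspace topology). -/
def sphInterior {d : ℕ} (C : Set (EuclideanSpace ℝ (Fin (d + 1)))) :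
    Set (EuclideanSpace ℝ (Fin (d + 1))) :=
  {x ∈ Sph d | ∃ ε > 0, ∀ y ∈ Sph d, dist y x < ε → y ∈ C}

/-- Boundary of a closed set `C ⊆ S^d` relative to the sphere. -/
def sphBoundary {d : ℕ} (C : Set (EuclideanSpace ℝ (Fin (d + 1)))) :
    Set (EuclideanSpace ℝ (Fin (d + 1))) :=
  C \ sphInterior C

/-- A spherical convex body: closed, spherically convex, with nonempty interior in `S^d`. -/
def SphBody {d : ℕ} (C : Set (EuclideanSpace ℝ (Fin (d + 1)))) : Prop :=
  SphConvex C ∧ IsClosed C ∧ (sphInterior C).Nonempty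

/-- `H(c)` supports `C` at `p`. -/
def SupportsAt {d : ℕ} (c : EuclideanSpace ℝ (Fin (d + 1)))
    (C : Set (EuclideanSpace ℝ (Fin (d + 1)))) (p : EuclideanSpace ℝ (Fin (d + 1))) : Prop :=
  c ∈ Sph d ∧ C ⊆ Hemi c ∧ p ∈ C ∧ ⟪c, p⟫ = 0

/-- `H(c)` supports `C` (at some point). -/
def Supports {d : ℕ} (c : EuclideanSpace ℝ (Fin (d + 1)))
    (C : Set (EuclideanSpace ℝ (Fin (d + 1)))) : Prop :=
  ∃ p, SupportsAt c C p

/-- The width of `C` determined by the supporting hemisphere `H(a)`: the infimum of the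
thicknesses `π - arccos ⟪a, b⟫` of the lunes `H(a) ∩ H(b)` containing `C`. -/
def widthAt {d : ℕ} (a : EuclideanSpace ℝ (Fin (d + 1)))
    (C : Set (EuclideanSpace ℝ (Fin (d + 1)))) : ℝ :=
  sInf {w | ∃ b ∈ Sph d, b ≠ a ∧ b ≠ -a ∧ C ⊆ Hemi b ∧ w = π - Real.arccos ⟪a, b⟫}

/-- `C` is of constant width `w`. -/
def ConstWidth {d : ℕ} (C : Set (EuclideanSpace ℝ (Fin (d + 1)))) (w : ℝ) : Prop :=
  ∀ a, Supports a C → widthAt a C = w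

/-- The diameter of `C`. -/
def sphDiam {d : ℕ} (C : Set (EuclideanSpace ℝ (Fin (d + 1)))) : ℝ :=
  sSup {r | ∃ x ∈ C, ∃ y ∈ C, r = sdist x y}

/-- `C` is of constant diameter `δ`. -/
def ConstDiam {d : ℕ} (C : Set (EuclideanSpace ℝ (Fin (d + 1)))) (δ : ℝ) : Prop :=
  sphDiam C = δ ∧ ∀ p ∈ sphBoundary C, ∃ p' ∈ sphBoundary C, sdist p p' = δ

/-- A boundary point `p` of `C` is smooth if exactly one hemisphere supports `C` at `p`. -/
def SmoothPoint {d : ℕ} (C : Set (EuclideanSpace ℝ (Fin (d + 1))))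
    (p : EuclideanSpace ℝ (Fin (d + 1))) : Prop :=
  ∃! c, SupportsAt c C p

/-- A smooth spherical convex body: every boundary point is smooth. -/
def SmoothBody {d : ℕ} (C : Set (EuclideanSpace ℝ (Fin (d + 1)))) : Prop :=
  ∀ p ∈ sphBoundary C, SmoothPoint C p

/-- `C` is strictly convex: its boundary contains no nondegenerate arc. -/
def StrictlySphConvex {d : ℕ} (C : Set (EuclideanSpace ℝ (Fin (d + 1)))) : Prop :=
  ∀ a ∈ sphBoundary C, ∀ b ∈ sphBoundary C, a ≠ b → b ≠ -a →
    ¬ (arc a b ⊆ sphBoundary C)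

/-- The polar of `C`. -/
def sphPolar {d : ℕ} (C : Set (EuclideanSpace ℝ (Fin (d + 1)))) :
    Set (EuclideanSpace ℝ (Fin (d + 1))) :=
  {r ∈ Sph d | C ⊆ Hemi r}

/-! If both diagonals had length at most `δ`, adding the identities
`sdist a x + sdist x dd = sdist a dd` and `sdist b x + sdist x c = sdist b c` (valid since `x`
lies on both diagonals) to the triangle inequalities through `x` for the sides `ab` and `c·dd`,
both of length `δ`, would force `sdist a x + sdist x b = sdist a b`. As `sdist a b < π`, this
equality case of the spherical triangle inequality puts `x` on the arc `ab`. -/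

open InnerProductGeometry
open scoped NNReal

theorem one_sub_smul_add_smul_ne_zero {V : Type*} [NormedAddCommGroup V] [NormedSpace ℝ V]
    {a b : V} (hnorm : ‖a‖ = ‖b‖) (hne : a ≠ -b) {s : ℝ} (hs : s ∈ Set.Icc (0 : ℝ) 1) :
    (1 - s) • a + s • b ≠ 0 := by
  intro h
  have hnorms : (1 - s) * ‖a‖ = s * ‖a‖ := by
    have := congrArg norm (eq_neg_of_add_eq_zero_left h)
    rwa [norm_neg, norm_smul, norm_smul, Real.norm_of_nonneg (sub_nonneg.2 hs.2),
      Real.norm_of_nonneg hs.1, ← hnorm] at this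
  rcases eq_or_ne ‖a‖ 0 with ha | ha
  · rw [norm_eq_zero.1 ha, norm_eq_zero.1 (hnorm.symm.trans ha), neg_zero] at hne
    exact hne rfl
  · have hs : s = 1 / 2 := by linarith [mul_right_cancel₀ ha hnorms]
    refine hne (eq_neg_of_add_eq_zero_left ?_)
    calc a + b = (2 : ℝ) • ((1 - s) • a + s • b) := by rw [hs]; module
      _ = 0 := by rw [h, smul_zero]

section SphericalArcs

variable {d : ℕ} {a b x y : EuclideanSpace ℝ (Fin (d + 1))}

theorem sdist_comm (x y : EuclideanSpace ℝ (Fin (d + 1))) : sdist x y = sdist y x := by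
  rw [sdist, sdist, real_inner_comm]

theorem sdist_eq_angle (hx : x ∈ Sph d) (hy : y ∈ Sph d) : sdist x y = angle x y := by
  rw [sdist, angle, show ‖x‖ = 1 from hx, show ‖y‖ = 1 from hy, mul_one, div_one]

theorem sdist_le_sdist_add_sdist {z : EuclideanSpace ℝ (Fin (d + 1))}
    (hx : x ∈ Sph d) (hy : y ∈ Sph d) (hz : z ∈ Sph d) :
    sdist x z ≤ sdist x y + sdist y z := by
  rw [sdist_eq_angle hx hz, sdist_eq_angle hx hy, sdist_eq_angle hy hz]
  exact angle_le_angle_add_angle x y z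

theorem ne_zero_of_mem_sph (hx : x ∈ Sph d) : x ≠ 0 := by
  rintro rfl
  simp [Sph] at hx

theorem mem_sph_of_mem_arc (ha : a ∈ Sph d) (hb : b ∈ Sph d) (hne : a ≠ -b)
    (hx : x ∈ arc a b) : x ∈ Sph d := by
  obtain ⟨s, hs, rfl⟩ := hx
  have hnorm : ‖a‖ = ‖b‖ := by rw [show ‖a‖ = 1 from ha, show ‖b‖ = 1 from hb]
  exact norm_smul_inv_norm (one_sub_smul_add_smul_ne_zero hnorm hne hs)

theorem mem_span_of_mem_arc (hx : x ∈ arc a b) : x ∈ Submodule.span ℝ≥0 {a, b} := by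
  obtain ⟨s, ⟨hs0, hs1⟩, rfl⟩ := hx
  set N := ‖(1 - s) • a + s • b‖⁻¹
  rw [Submodule.mem_span_pair]
  refine ⟨(N * (1 - s)).toNNReal, (N * s).toNNReal, ?_⟩
  rw [NNReal.smul_def, NNReal.smul_def, Real.coe_toNNReal _ (by positivity),
    Real.coe_toNNReal _ (by positivity), smul_add, mul_smul, mul_smul]

theorem mem_arc_of_mem_span (hx : x ∈ Sph d) (hspan : x ∈ Submodule.span ℝ≥0 {a, b}) :
    x ∈ arc a b := by
  obtain ⟨μ', ν', hμν⟩ := Submodule.mem_span_pair.1 hspan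
  rw [NNReal.smul_def, NNReal.smul_def] at hμν
  have hμ := μ'.coe_nonneg
  have hν := ν'.coe_nonneg
  generalize (μ' : ℝ) = μ at hμν hμ
  generalize (ν' : ℝ) = ν at hμν hν
  have hsum : 0 < μ + ν := by
    refine lt_of_le_of_ne (by positivity) fun h => ne_zero_of_mem_sph hx ?_
    rw [← hμν, show μ = 0 by linarith, show ν = 0 by linarith, zero_smul, zero_smul, add_zero]
  refine ⟨ν / (μ + ν), ⟨by positivity, (div_le_one hsum).2 (by linarith)⟩, ?_⟩
  have hpoint : (1 - ν / (μ + ν)) • a + (ν / (μ + ν)) • b = (μ + ν)⁻¹ • x := by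
    rw [← hμν]
    match_scalars
    · field_simp
      ring
    · field_simp
  rw [hpoint, norm_smul, Real.norm_of_nonneg (inv_nonneg.2 hsum.le), show ‖x‖ = 1 from hx,
    mul_one, inv_inv, smul_smul, mul_inv_cancel₀ hsum.ne', one_smul]

theorem sdist_add_sdist_of_mem_arc (ha : a ∈ Sph d) (hb : b ∈ Sph d) (hne : a ≠ -b)
    (hx : x ∈ arc a b) : sdist a x + sdist x b = sdist a b := by
  have hxS := mem_sph_of_mem_arc ha hb hne hx
  rw [sdist_eq_angle ha hxS, sdist_eq_angle hxS hb, sdist_eq_angle ha hb]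
  exact (angle_eq_angle_add_add_angle_add_of_mem_span (ne_zero_of_mem_sph hxS)
    (mem_span_of_mem_arc hx)).symm

theorem mem_arc_of_sdist_add_sdist_eq (ha : a ∈ Sph d) (hb : b ∈ Sph d) (hx : x ∈ Sph d)
    (hlt : sdist a b < π) (heq : sdist a x + sdist x b = sdist a b) : x ∈ arc a b := by
  rw [sdist_eq_angle ha hx, sdist_eq_angle hx hb, sdist_eq_angle ha hb] at heq
  rw [sdist_eq_angle ha hb] at hlt
  refine mem_arc_of_mem_span hx ?_
  exact ((angle_eq_angle_add_angle_iff (ne_zero_of_mem_sph hx)).1 heq.symm).resolve_left hlt.ne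

end SphericalArcs

theorem quadrangle_diagonal_long_general (d : ℕ) (δ : ℝ)
    (hδπ : δ < π)
    (a b c dd : EuclideanSpace ℝ (Fin (d + 1)))
    (ha : a ∈ Sph d) (hb : b ∈ Sph d) (hc : c ∈ Sph d) (hdd : dd ∈ Sph d)
    (hab : sdist a b = δ) (hcdd : sdist c dd = δ)
    (hadd : a ≠ -dd) (hbc : b ≠ -c)
    (x : EuclideanSpace ℝ (Fin (d + 1)))
    (hx1 : x ∈ arc a dd) (hx2 : x ∈ arc b c)
    (hx3 : x ∉ arc a b) :
    δ < sdist a dd ∨ δ < sdist b c := by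
  by_contra! hshort
  have hx : x ∈ Sph d := mem_sph_of_mem_arc ha hdd hadd hx1
  have hdiag₁ := sdist_add_sdist_of_mem_arc ha hdd hadd hx1
  have hdiag₂ := sdist_add_sdist_of_mem_arc hb hc hbc hx2
  have hside₁ := sdist_le_sdist_add_sdist ha hx hb
  have hside₂ := sdist_le_sdist_add_sdist hc hx hdd
  refine hx3 (mem_arc_of_sdist_add_sdist_eq ha hb hx (hab ▸ hδπ) ?_)
  linarith [sdist_comm b x, sdist_comm c x]

/-- if the diagonals `a·dd` and `b·c` of the spherical quadrangle meet
at a point `x` lying outside the sides `ab` and `c·dd` of length `δ`, then one of the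
diagonals is longer than `δ`. -/
theorem quadrangle_diagonal_long (d : ℕ) (hd : 2 ≤ d) (δ : ℝ)
    (hδ0 : 0 < δ) (hδπ : δ < π)
    (a b c dd : EuclideanSpace ℝ (Fin (d + 1)))
    (ha : a ∈ Sph d) (hb : b ∈ Sph d) (hc : c ∈ Sph d) (hdd : dd ∈ Sph d)
    (hab : sdist a b = δ) (hcdd : sdist c dd = δ)
    (hadd : a ≠ -dd) (hbc : b ≠ -c)
    (x : EuclideanSpace ℝ (Fin (d + 1)))
    (hx1 : x ∈ arc a dd) (hx2 : x ∈ arc b c)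
    (hx3 : x ∉ arc a b) (hx4 : x ∉ arc c dd) :
    δ < sdist a dd ∨ δ < sdist b c :=
  quadrangle_diagonal_long_general d δ hδπ a b c dd ha hb hc hdd hab hcdd hadd hbc x hx1 hx2 hx3

end
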